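/- Let W : ℝ^{m+n} → ℝ^{m+n} be a C¹ vector field of the form W(q) = ζ(q)·e, where e is a fixed unit vector lying in an m-plane π₀ and ζ depends, in a neighborhood of a subspace V ⊆ π₀ with e ⊥ V, only on the V-coordinates. Then for any m-dimensional plane π the tangential divergence satisfies |div_π W(q)| ≤ C·|P_{π₀} − P_π|·|P_V ∘ P_{π^⊥}|·|DW(q)|, where P denotes orthogonal projection and |·| the operator (or Hilbert–Schmidt) norm. In particular, if V ⊆ π then div_π W = 0 in that neighborhood. -/

import Mathlib

/-- The orthogonal projection of `ℝ^d` onto a subspace, as a continuous linear endomorphism. -/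
noncomputable def projCLM {d : ℕ} (π : Submodule ℝ (EuclideanSpace ℝ (Fin d))) :
    EuclideanSpace ℝ (Fin d) →L[ℝ] EuclideanSpace ℝ (Fin d) :=
  π.subtypeL.comp (π.orthogonalProjection)

/-- The tangential divergence of a vector field `W` relative to a plane `π`:
`div_π W(q) = tr(P_π ∘ DW(q))`. -/
noncomputable def tangentialDiv {d : ℕ} (π : Submodule ℝ (EuclideanSpace ℝ (Fin d)))
    (W : EuclideanSpace ℝ (Fin d) → EuclideanSpace ℝ (Fin d))
    (q : EuclideanSpace ℝ (Fin d)) : ℝ :=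
  LinearMap.trace ℝ (EuclideanSpace ℝ (Fin d)) ((projCLM π).comp (fderiv ℝ W q) :
    EuclideanSpace ℝ (Fin d) →L[ℝ] EuclideanSpace ℝ (Fin d)).toLinearMap

/-!
Since `W = ζ • e`, the derivative `DW(q) = L ⊗ e` has rank one, with `L = Dζ(q)`, so
`div_π W(q) = L (P_π e)`. Local dependence of `ζ` on the `V`-coordinates gives `L = L ∘ P_V`, and
`P_V e = 0`, `P_{π₀} e = e` turn `P_V P_π e` into `-P_V (1 - P_π) (P_{π₀} - P_π) e`.
Bounding by operator norms gives the estimate with `C = 1`; when `V ⊆ π`, `P_V (1 - P_π) = 0`.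
-/

open Submodule ContinuousLinearMap Filter Topology

section Projection

variable {𝕜 E : Type*} [RCLike 𝕜] [NormedAddCommGroup E] [InnerProductSpace 𝕜 E]

theorem Submodule.starProjection_comp_id_sub_starProjection_of_le {V π : Submodule 𝕜 E}
    [V.HasOrthogonalProjection] [π.HasOrthogonalProjection] (h : V ≤ π) :
    V.starProjection ∘L (ContinuousLinearMap.id 𝕜 E - π.starProjection) = 0 := by
  rw [← starProjection_orthogonal]
  exact ((isOrtho_orthogonal_right π).mono_left h).starProjection_comp_starProjection

theorem Submodule.starProjection_comp_id_sub_starProjection_apply_sub {π₀ π V : Submodule 𝕜 E}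
    [π₀.HasOrthogonalProjection] [π.HasOrthogonalProjection] [V.HasOrthogonalProjection]
    {e : E} (he₀ : e ∈ π₀) (heV : e ∈ Vᗮ) :
    (V.starProjection ∘L (ContinuousLinearMap.id 𝕜 E - π.starProjection))
        ((π₀.starProjection - π.starProjection) e) =
      -V.starProjection (π.starProjection e) := by
  have hπ : π.starProjection (π.starProjection e) = π.starProjection e :=
    starProjection_eq_self_iff.mpr (starProjection_apply_mem π e)
  simp [starProjection_eq_self_iff.mpr he₀, (starProjection_apply_eq_zero_iff V).mpr heV, hπ]

theorem fderiv_comp_starProjection_of_eventuallyEq {F : Type*} [NormedAddCommGroup F]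
    [NormedSpace 𝕜 F] {ζ : E → F} {V : Submodule 𝕜 E} [V.HasOrthogonalProjection] {q : E}
    (hζ : DifferentiableAt 𝕜 ζ (V.starProjection q)) (h : ζ =ᶠ[𝓝 q] ζ ∘ V.starProjection) :
    fderiv 𝕜 ζ q ∘L V.starProjection = fderiv 𝕜 ζ q := by
  rw [h.fderiv_eq, fderiv_comp q hζ V.starProjection.differentiableAt,
    V.starProjection.fderiv, comp_assoc, starProjection_comp_starProjection_of_le le_rfl]

end Projection

theorem abs_apply_starProjection_le {E : Type*} [NormedAddCommGroup E] [InnerProductSpace ℝ E]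
    {π₀ π V : Submodule ℝ E}
    [π₀.HasOrthogonalProjection] [π.HasOrthogonalProjection] [V.HasOrthogonalProjection]
    {L : StrongDual ℝ E} (hL : L ∘L V.starProjection = L) {e : E} (he₀ : e ∈ π₀)
    (heV : e ∈ Vᗮ) :
    |L (π.starProjection e)| ≤ ‖π₀.starProjection - π.starProjection‖ *
      ‖V.starProjection ∘L (ContinuousLinearMap.id ℝ E - π.starProjection)‖ * (‖L‖ * ‖e‖) := by
  set A := π₀.starProjection - π.starProjection
  set B := V.starProjection ∘L (ContinuousLinearMap.id ℝ E - π.starProjection)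
  have hkey : L (π.starProjection e) = -L (B (A e)) := by
    rw [starProjection_comp_id_sub_starProjection_apply_sub he₀ heV, map_neg, neg_neg,
      ← comp_apply L V.starProjection, hL]
  calc |L (π.starProjection e)| = ‖L (B (A e))‖ := by rw [hkey, abs_neg, Real.norm_eq_abs]
    _ ≤ ‖L‖ * (‖B‖ * (‖A‖ * ‖e‖)) := L.le_of_opNorm_le_of_le le_rfl (B.le_of_opNorm_le_of_le
        le_rfl (A.le_opNorm e))
    _ = ‖A‖ * ‖B‖ * (‖L‖ * ‖e‖) := by ring

theorem projCLM_eq_starProjection {d : ℕ} (π : Submodule ℝ (EuclideanSpace ℝ (Fin d))) :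
    projCLM π = π.starProjection :=
  rfl

theorem tangentialDiv_smul_const {d : ℕ} (π : Submodule ℝ (EuclideanSpace ℝ (Fin d)))
    {ζ : EuclideanSpace ℝ (Fin d) → ℝ} {q : EuclideanSpace ℝ (Fin d)}
    (hζ : DifferentiableAt ℝ ζ q) (e : EuclideanSpace ℝ (Fin d)) :
    tangentialDiv π (fun x => ζ x • e) q = fderiv ℝ ζ q (projCLM π e) := by
  have hcomp : projCLM π ∘L (fderiv ℝ ζ q).smulRight e =
      (fderiv ℝ ζ q).smulRight (projCLM π e) := by
    ext x
    simp
  rw [tangentialDiv, fderiv_smul_const hζ, hcomp]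
  exact LinearMap.trace_smulRight _ _

/-- Let `W(q) = ζ(q) • e` with `e` a unit vector of an `m`-plane `π₀`, `V ⊆ π₀` a subspace with
`e ⊥ V`, and suppose that on a neighborhood `U` of `V` the function `ζ` depends only on the
`V`-coordinates.  Then for every `m`-plane `π` and `q ∈ U`,
`|div_π W(q)| ≤ C ‖P_{π₀} − P_π‖ ‖P_V ∘ P_{π^⊥}‖ ‖DW(q)‖`; in particular `div_π W = 0` on `U`
whenever `V ⊆ π`. -/
theorem stmt_14 :
    ∃ C : ℝ, 0 < C ∧
      ∀ (d m : ℕ) (π₀ π V : Submodule ℝ (EuclideanSpace ℝ (Fin d)))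
        (e : EuclideanSpace ℝ (Fin d)) (ζ : EuclideanSpace ℝ (Fin d) → ℝ)
        (U : Set (EuclideanSpace ℝ (Fin d))),
        Module.finrank ℝ π₀ = m → Module.finrank ℝ π = m →
        V ≤ π₀ → e ∈ π₀ → ‖e‖ = 1 →
        (∀ v ∈ V, inner ℝ e v = (0 : ℝ)) →
        IsOpen U → (V : Set (EuclideanSpace ℝ (Fin d))) ⊆ U →
        Differentiable ℝ ζ →
        (∀ q ∈ U, ζ q = ζ ((V.orthogonalProjection q : EuclideanSpace ℝ (Fin d)))) →
        ∀ q ∈ U,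
          (|tangentialDiv π (fun x => ζ x • e) q| ≤
            C * ‖projCLM π₀ - projCLM π‖ *
              ‖(projCLM V).comp
                (ContinuousLinearMap.id ℝ (EuclideanSpace ℝ (Fin d)) - projCLM π)‖ *
              ‖fderiv ℝ (fun x => ζ x • e) q‖) ∧
          (V ≤ π → tangentialDiv π (fun x => ζ x • e) q = 0) := by
  refine ⟨1, one_pos, fun d m π₀ π V e ζ U _ _ _ he₀ _ heV hU _ hζ hloc q hq => ?_⟩
  have hL : fderiv ℝ ζ q ∘L V.starProjection = fderiv ℝ ζ q :=
    fderiv_comp_starProjection_of_eventuallyEq (hζ _)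
      (eventually_of_mem (hU.mem_nhds hq) hloc)
  have hbound : |tangentialDiv π (fun x => ζ x • e) q| ≤ ‖projCLM π₀ - projCLM π‖ *
      ‖(projCLM V).comp (ContinuousLinearMap.id ℝ (EuclideanSpace ℝ (Fin d)) - projCLM π)‖ *
        ‖fderiv ℝ (fun x => ζ x • e) q‖ := by
    rw [tangentialDiv_smul_const π (hζ q), fderiv_smul_const (hζ q), norm_smulRight_apply]
    exact abs_apply_starProjection_le hL he₀ ((mem_orthogonal' V e).mpr heV)
  rw [one_mul]
  refine ⟨hbound, fun hVπ => abs_nonpos_iff.mp ?_⟩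
  simpa [projCLM_eq_starProjection, starProjection_comp_id_sub_starProjection_of_le hVπ]
    using hbound
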